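/- Let τ > 0, ρ ∈ (0, 1], and let c : ℝ → ℝ be measurable with ∫ c² dγ_τ < ∞. Define h(t) = ∫ max(0, t−u)·c(u) dγ_τ(u) and φ_ρ(t) = ∫ max(0, ρt + √(1−ρ²)·z) dγ(z). Then for every t ∈ ℝ: ∫ h(ρt + √(1−ρ²)·z) dγ(z) = ∫ φ_ρ(t−u)·c(ρu) dγ_{τ/ρ}(u), and ∫ c(ρu)² dγ_{τ/ρ}(u) = ∫ c(u)² dγ_τ(u). -/

import Mathlib

/-!
Fubini moves the Gaussian smoothing in `z` inside the feature integral, where it acts on the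
ReLU alone. The substitution `u ↦ ρ u`, which pushes `γ_{τ/ρ}` forward to `γ_τ`, then turns
`φ(ρ t + √(1 - ρ²) z - ρ u)` into the integrand of `φ_ρ(t - u)` and leaves `∫ c² dγ_τ` unchanged.
Fubini applies because `|max 0 (x - u)| ≤ |x| + |u|` and `u ↦ u c(u)` is `γ_τ`-integrable by
Cauchy–Schwarz.
-/

open MeasureTheory ProbabilityTheory

/-- The centered Gaussian measure `N(0, σ²)` on `ℝ`. -/
noncomputable def gaussMeasure (σ : ℝ) : Measure ℝ :=
  gaussianReal 0 (Real.toNNReal (σ ^ 2))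

/-- The `ρ`-smoothed ReLU `φ_ρ = U_ρ φ`. -/
noncomputable def smoothedRelu (ρ : ℝ) (t : ℝ) : ℝ :=
  ∫ u, max 0 (ρ * t + Real.sqrt (1 - ρ ^ 2) * u) ∂(gaussMeasure 1)

instance (σ : ℝ) : IsProbabilityMeasure (gaussMeasure σ) := by
  unfold gaussMeasure; infer_instance

lemma memLp_id_gaussMeasure {p : ENNReal} (hp : p ≠ ⊤) (σ : ℝ) :
    MemLp id p (gaussMeasure σ) :=
  memLp_id_gaussianReal' p hp

lemma gaussMeasure_map_const_mul (a σ : ℝ) :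
    (gaussMeasure σ).map (a * ·) = gaussMeasure (a * σ) := by
  rw [gaussMeasure, gaussianReal_map_const_mul, mul_zero, gaussMeasure]
  congr 1
  ext
  simp [mul_pow, mul_nonneg, sq_nonneg]

lemma integral_comp_mul_gaussMeasure_div {E : Type*} [NormedAddCommGroup E] [NormedSpace ℝ E]
    {a : ℝ} (ha : a ≠ 0) (σ : ℝ) (f : ℝ → E) :
    ∫ u, f (a * u) ∂gaussMeasure (σ / a) = ∫ u, f u ∂gaussMeasure σ :=
  calc ∫ u, f (a * u) ∂gaussMeasure (σ / a)
      = ∫ u, f (MeasurableEquiv.mulLeft₀ a ha u) ∂gaussMeasure (σ / a) := rfl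
    _ = ∫ u, f u ∂(gaussMeasure (σ / a)).map (a * ·) := (integral_map_equiv _ f).symm
    _ = ∫ u, f u ∂gaussMeasure σ := by rw [gaussMeasure_map_const_mul, mul_div_cancel₀ σ ha]

lemma abs_max_zero_sub_le (x u : ℝ) : |max 0 (x - u)| ≤ |x| + |u| := by
  rw [abs_of_nonneg (le_max_left _ _)]
  exact max_le (by positivity) ((le_abs_self _).trans (abs_sub _ _))

section Relu

variable {μ ν : Measure ℝ} [IsFiniteMeasure μ] [IsFiniteMeasure ν] {g c : ℝ → ℝ}

lemma integrable_relu_sub_mul_prod (hg : Integrable g μ) (hc : Integrable c ν)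
    (hc' : Integrable (fun u => u * c u) ν) :
    Integrable (fun p : ℝ × ℝ => max 0 (g p.1 - p.2) * c p.2) (μ.prod ν) := by
  have hmeas : AEStronglyMeasurable (fun p : ℝ × ℝ => max 0 (g p.1 - p.2) * c p.2) (μ.prod ν) :=
    (aestronglyMeasurable_const.sup (hg.1.comp_fst.sub measurable_snd.aestronglyMeasurable)).mul
      hc.1.comp_snd
  refine ((hg.norm.mul_prod hc.norm).add (hc'.norm.comp_snd μ)).mono' hmeas
    (ae_of_all _ fun p => ?_)
  simp only [Real.norm_eq_abs, norm_mul, Pi.add_apply]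
  nlinarith [mul_le_mul_of_nonneg_right (abs_max_zero_sub_le (g p.1) p.2) (abs_nonneg (c p.2))]

lemma integral_integral_relu_sub_mul_swap (hg : Integrable g μ) (hc : Integrable c ν)
    (hc' : Integrable (fun u => u * c u) ν) :
    ∫ z, ∫ u, max 0 (g z - u) * c u ∂ν ∂μ = ∫ u, (∫ z, max 0 (g z - u) ∂μ) * c u ∂ν := by
  simp_rw [← integral_mul_const]
  exact integral_integral_swap (integrable_relu_sub_mul_prod hg hc hc')

end Relu

theorem smoothing_commutes_with_feature_expansion (τ ρ : ℝ)
    (hρ : ρ ∈ Set.Ioc (0 : ℝ) 1) (c : ℝ → ℝ) (hc : Measurable c)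
    (hcL2 : Integrable (fun u => c u ^ 2) (gaussMeasure τ)) :
    ∀ t : ℝ,
      (∫ z, (∫ u, max 0 ((ρ * t + Real.sqrt (1 - ρ ^ 2) * z) - u) * c u ∂(gaussMeasure τ))
          ∂(gaussMeasure 1)) =
        (∫ u, smoothedRelu ρ (t - u) * c (ρ * u) ∂(gaussMeasure (τ / ρ))) ∧
      (∫ u, c (ρ * u) ^ 2 ∂(gaussMeasure (τ / ρ))) = ∫ u, c u ^ 2 ∂(gaussMeasure τ) := by
  have hρ0 : ρ ≠ 0 := hρ.1.ne'
  have hc_memLp : MemLp c 2 (gaussMeasure τ) :=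
    (memLp_two_iff_integrable_sq hc.aestronglyMeasurable).2 hcL2
  intro t
  refine ⟨?_, integral_comp_mul_gaussMeasure_div hρ0 τ fun u => c u ^ 2⟩
  have h_arg : Integrable (fun z => ρ * t + Real.sqrt (1 - ρ ^ 2) * z) (gaussMeasure 1) :=
    (integrable_const _).add
      (((memLp_id_gaussMeasure ENNReal.one_ne_top 1).integrable le_rfl).const_mul _)
  rw [integral_integral_relu_sub_mul_swap h_arg (hc_memLp.integrable one_le_two)
      ((memLp_id_gaussMeasure (p := 2) ENNReal.ofNat_ne_top τ).integrable_mul hc_memLp),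
    ← integral_comp_mul_gaussMeasure_div hρ0 τ]
  simp only [smoothedRelu, mul_sub, sub_add_eq_add_sub]
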